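/- arXiv:2407.03534 — 2 statements merged into one kernel-verified Lean document; each statement's English description precedes it below -/
import Mathlib

section
/- Let p : X → Y be a submetry between metric spaces with X proper (every closed ball compact). If some fiber p⁻¹(y₀) is compact, then every fiber p⁻¹(y) is compact. -/
/-!
A submetry lifts distances: for every `x` and `y`, the fiber over `y` contains a point within
`dist y (p x)` of `x`. Hence the fiber over `y` lies in the closed `dist y y₀`-neighbourhood of
the fiber over `y₀`, which is compact in a proper space; and fibers of the `1`-Lipschitz map `p`
are closed.
-/

/-- A submetry maps closed balls onto closed balls of the same radius. -/
def IsSubmetry {X Y : Type*} [MetricSpace X] [MetricSpace Y] (p : X → Y) : Prop :=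
  ∀ x : X, ∀ r : ℝ, 0 ≤ r → p '' Metric.closedBall x r = Metric.closedBall (p x) r

namespace IsSubmetry

open Metric

variable {X Y : Type*} [MetricSpace X] [MetricSpace Y] {p : X → Y}

theorem lipschitzWith_one (hp : IsSubmetry p) : LipschitzWith 1 p :=
  LipschitzWith.mk_one fun x x' => by
    have hx' : p x' ∈ p '' closedBall x (dist x' x) :=
      Set.mem_image_of_mem p (mem_closedBall.2 le_rfl)
    rw [hp x _ dist_nonneg, mem_closedBall] at hx'
    rwa [dist_comm (p x), dist_comm x]

theorem exists_dist_le_of_dist_le (hp : IsSubmetry p) {x : X} {y : Y} {r : ℝ}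
    (hy : dist y (p x) ≤ r) : ∃ x', p x' = y ∧ dist x' x ≤ r := by
  have hy' : y ∈ p '' closedBall x r := by
    rw [hp x r (dist_nonneg.trans hy)]
    exact hy
  obtain ⟨x', hx', rfl⟩ := hy'
  exact ⟨x', rfl, hx'⟩

theorem preimage_singleton_subset_cthickening (hp : IsSubmetry p) (y y₀ : Y) :
    p ⁻¹' {y} ⊆ cthickening (dist y y₀) (p ⁻¹' {y₀}) := by
  rintro x rfl
  obtain ⟨x', hx', hdist⟩ := hp.exists_dist_le_of_dist_le (dist_comm y₀ (p x)).le
  exact mem_cthickening_of_dist_le x x' _ _ hx' (dist_comm x x' ▸ hdist)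

theorem isCompact_preimage_singleton [ProperSpace X] (hp : IsSubmetry p) {y₀ : Y}
    (hcpt : IsCompact (p ⁻¹' {y₀})) (y : Y) : IsCompact (p ⁻¹' {y}) :=
  hcpt.cthickening.of_isClosed_subset (isClosed_singleton.preimage hp.lipschitzWith_one.continuous)
    (hp.preimage_singleton_subset_cthickening y y₀)

end IsSubmetry

theorem submetry_all_fibers_compact_general {X Y : Type*} [MetricSpace X] [MetricSpace Y]
    [ProperSpace X] (p : X → Y) (hsub : IsSubmetry p)
    (y₀ : Y) (hcpt : IsCompact (p ⁻¹' {y₀})) :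
    ∀ y : Y, IsCompact (p ⁻¹' {y}) :=
  hsub.isCompact_preimage_singleton hcpt

theorem submetry_all_fibers_compact {X Y : Type*} [MetricSpace X] [MetricSpace Y]
    [ProperSpace X] (p : X → Y) (hsurj : Function.Surjective p) (hsub : IsSubmetry p)
    (y₀ : Y) (hcpt : IsCompact (p ⁻¹' {y₀})) :
    ∀ y : Y, IsCompact (p ⁻¹' {y}) :=
  submetry_all_fibers_compact_general p hsub y₀ hcpt
end

section
/- Let p : X → Y be a submetry and let x₁, x₂ ∈ X be 'near' points, i.e., d(x₁, x₂) = d(p(x₁), p(x₂)). Then any shortest path (geodesic) γ from x₁ to x₂ in X is mapped by p onto a shortest path from p(x₁) to p(x₂) in Y, and p restricted to the image of γ is an isometry onto its image. -/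
open Set

theorem IsSubmetry.lipschitzWith {X Y : Type*} [MetricSpace X] [MetricSpace Y] {p : X → Y}
    (hp : IsSubmetry p) : LipschitzWith 1 p :=
  LipschitzWith.of_dist_le_mul fun a b => by
    have hb : p b ∈ Metric.closedBall (p a) (dist a b) := by
      rw [← hp a _ dist_nonneg]
      exact mem_image_of_mem p (Metric.mem_closedBall.2 (dist_comm b a).le)
    simpa [dist_comm] using Metric.mem_closedBall.1 hb

theorem LipschitzOnWith.dist_eq_abs_sub_of_le_dist {Y : Type*} [PseudoMetricSpace Y]
    {c : ℝ → Y} {L : ℝ} (hc : LipschitzOnWith 1 c (Icc 0 L)) (hL : L ≤ dist (c 0) (c L))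
    {s t : ℝ} (hs : s ∈ Icc 0 L) (ht : t ∈ Icc 0 L) : dist (c s) (c t) = |s - t| := by
  wlog hst : s ≤ t generalizing s t
  · rw [dist_comm, abs_sub_comm]
    exact this ht hs (le_of_not_ge hst)
  have hdist : ∀ u ∈ Icc 0 L, ∀ v ∈ Icc 0 L, u ≤ v → dist (c u) (c v) ≤ v - u :=
    fun u hu v hv huv => by
      simpa [Real.dist_eq, abs_of_nonpos (sub_nonpos.2 huv)] using
        hc.dist_le_mul u hu v hv
  have h0 : (0 : ℝ) ∈ Icc 0 L := ⟨le_rfl, hs.1.trans (hst.trans ht.2)⟩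
  have hL' : L ∈ Icc 0 L := ⟨h0.2, le_rfl⟩
  rw [abs_sub_comm, abs_of_nonneg (sub_nonneg.2 hst)]
  refine le_antisymm (hdist s hs t ht hst) ?_
  linarith [hdist 0 h0 s hs hs.1, hdist t ht L hL' ht.2, dist_triangle4 (c 0) (c s) (c t) (c L)]

theorem submetry_horizontal_geodesic_general {X Y : Type*} [MetricSpace X] [MetricSpace Y]
    (p : X → Y) (hsub : IsSubmetry p)
    (x₁ x₂ : X) (hnear : dist x₁ x₂ = dist (p x₁) (p x₂))
    (γ : ℝ → X) (hγ0 : γ 0 = x₁) (hγ1 : γ (dist x₁ x₂) = x₂)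
    (hgeo : ∀ s ∈ Set.Icc (0 : ℝ) (dist x₁ x₂), ∀ t ∈ Set.Icc (0 : ℝ) (dist x₁ x₂),
      dist (γ s) (γ t) = |s - t|) :
    ∀ s ∈ Set.Icc (0 : ℝ) (dist x₁ x₂), ∀ t ∈ Set.Icc (0 : ℝ) (dist x₁ x₂),
      dist (p (γ s)) (p (γ t)) = |s - t| := by
  have hγ : LipschitzOnWith 1 γ (Icc 0 (dist x₁ x₂)) :=
    LipschitzOnWith.of_dist_le_mul fun s hs t ht => by
      rw [hgeo s hs t ht, NNReal.coe_one, one_mul, Real.dist_eq]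
  have hpγ : LipschitzOnWith 1 (p ∘ γ) (Icc 0 (dist x₁ x₂)) := by
    simpa using hsub.lipschitzWith.comp_lipschitzOnWith hγ
  have hends : dist x₁ x₂ ≤ dist ((p ∘ γ) 0) ((p ∘ γ) (dist x₁ x₂)) := by
    rw [Function.comp_apply, Function.comp_apply, hγ0, hγ1, hnear]
  exact fun s hs t ht => hpγ.dist_eq_abs_sub_of_le_dist hends hs ht

theorem submetry_horizontal_geodesic {X Y : Type*} [MetricSpace X] [MetricSpace Y]
    (p : X → Y) (hsurj : Function.Surjective p) (hsub : IsSubmetry p)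
    (x₁ x₂ : X) (hnear : dist x₁ x₂ = dist (p x₁) (p x₂))
    (γ : ℝ → X) (hγ0 : γ 0 = x₁) (hγ1 : γ (dist x₁ x₂) = x₂)
    (hgeo : ∀ s ∈ Set.Icc (0 : ℝ) (dist x₁ x₂), ∀ t ∈ Set.Icc (0 : ℝ) (dist x₁ x₂),
      dist (γ s) (γ t) = |s - t|) :
    ∀ s ∈ Set.Icc (0 : ℝ) (dist x₁ x₂), ∀ t ∈ Set.Icc (0 : ℝ) (dist x₁ x₂),
      dist (p (γ s)) (p (γ t)) = |s - t| :=
  submetry_horizontal_geodesic_general p hsub x₁ x₂ hnear γ hγ0 hγ1 hgeo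
end
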